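/- arXiv:2109.09721 — 4 statements merged into one kernel-verified Lean document; each statement's English description precedes it below -/
import Mathlib

section
/- Let f : ℝⁿ → ℝⁿ be continuously differentiable, let K be a real n×n matrix, and let m be an integer. Then f(exp(aK) z) = exp(m a K) f(z) for all a ∈ ℝ and all z ∈ ℝⁿ if and only if Df(z)(Kz) = m K f(z) for all z ∈ ℝⁿ, where Df(z) denotes the Jacobian of f at z. In particular (m = 1), f(exp(aK)z) = exp(aK) f(z) for all a, z if and only if J(z) Kz − K f(z) = 0 for all z. -/
open Matrix

def IsExpEquivariant {ι κ : Type*} [Fintype ι] [DecidableEq ι] [Fintype κ] [DecidableEq κ]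
    (f : (ι → ℝ) → κ → ℝ) (K : Matrix ι ι ℝ) (L : Matrix κ κ ℝ) : Prop :=
  ∀ (a : ℝ) (z : ι → ℝ), f (NormedSpace.exp (a • K) *ᵥ z) = NormedSpace.exp (a • L) *ᵥ f z

section

variable {ι κ : Type*} [Fintype ι] [DecidableEq ι] [Fintype κ] [DecidableEq κ]

-- Any norm on matrices would do: it is only needed to differentiate `exp`.
attribute [local instance] Matrix.linftyOpNormedRing Matrix.linftyOpNormedAlgebra

theorem Matrix.hasDerivAt_exp_smul_mulVec (K : Matrix ι ι ℝ) (z : ι → ℝ) (t : ℝ) :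
    HasDerivAt (fun a : ℝ => NormedSpace.exp (a • K) *ᵥ z)
      (K *ᵥ (NormedSpace.exp (t • K) *ᵥ z)) t := by
  have hz := (LinearMap.toContinuousLinearMap ((mulVecBilin ℝ ℝ).flip z)).hasFDerivAt
    |>.comp_hasDerivAt t (hasDerivAt_exp_smul_const' K t)
  rw [mulVec_mulVec]
  exact hz

variable {f : (ι → ℝ) → κ → ℝ} {K : Matrix ι ι ℝ} {L : Matrix κ κ ℝ}

theorem IsExpEquivariant.fderiv_apply_mulVec (hf : Differentiable ℝ f)
    (h : IsExpEquivariant f K L) (z : ι → ℝ) :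
    fderiv ℝ f z (K *ᵥ z) = L *ᵥ f z := by
  have hleft := (hf _).hasFDerivAt.comp_hasDerivAt 0 (hasDerivAt_exp_smul_mulVec K z 0)
  have hright := hasDerivAt_exp_smul_mulVec L (f z) 0
  simp only [zero_smul, NormedSpace.exp_zero, one_mulVec] at hleft hright
  rw [Function.comp_def, funext (h · z)] at hleft
  exact hleft.unique hright

/-- Both sides of the equivariance identity solve the linear ODE `y' = L y` with initial
value `f z`. -/
theorem isExpEquivariant_of_fderiv_apply_mulVec (hf : Differentiable ℝ f)
    (h : ∀ z, fderiv ℝ f z (K *ᵥ z) = L *ᵥ f z) : IsExpEquivariant f K L := by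
  intro a z
  have hL : LipschitzWith _ (L *ᵥ ·) := (LinearMap.toContinuousLinearMap L.mulVecLin).lipschitz
  have hleft (t : ℝ) : HasDerivAt (fun a : ℝ => f (NormedSpace.exp (a • K) *ᵥ z))
      (L *ᵥ f (NormedSpace.exp (t • K) *ᵥ z)) t := by
    rw [← h]
    exact (hf _).hasFDerivAt.comp_hasDerivAt t (hasDerivAt_exp_smul_mulVec K z t)
  have hsol := ODE_solution_unique_univ (v := fun _ => (L *ᵥ ·)) (s := fun _ => Set.univ)
    (t₀ := 0) (fun _ => hL.lipschitzOnWith) (fun t => ⟨hleft t, trivial⟩)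
    (fun t => ⟨hasDerivAt_exp_smul_mulVec L (f z) t, trivial⟩)
    (by simp only [zero_smul, NormedSpace.exp_zero, one_mulVec])
  exact congrFun hsol a

theorem isExpEquivariant_iff_fderiv_apply_mulVec (hf : Differentiable ℝ f) :
    IsExpEquivariant f K L ↔ ∀ z, fderiv ℝ f z (K *ᵥ z) = L *ᵥ f z :=
  ⟨fun h => h.fderiv_apply_mulVec hf, isExpEquivariant_of_fderiv_apply_mulVec hf⟩

end

/-- A continuously differentiable vector field `f : ℝⁿ → ℝⁿ` satisfies the Lie
equivariance condition `f(exp(aK) z) = exp(maK) f(z)` for all `a ∈ ℝ` and `z ∈ ℝⁿ`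
if and only if `Df(z)(Kz) = m K f(z)` for all `z`.  In particular (the case `m = 1`),
`f(exp(aK) z) = exp(aK) f(z)` for all `a, z` if and only if
`J(z) Kz − K f(z) = 0` for all `z`. -/
theorem lie_equivariance_iff_pde (n : ℕ)
    (f : (Fin n → ℝ) → (Fin n → ℝ)) (hf : ContDiff ℝ 1 f)
    (K : Matrix (Fin n) (Fin n) ℝ) (m : ℤ) :
    ((∀ (a : ℝ) (z : Fin n → ℝ),
        f ((NormedSpace.exp (a • K)).mulVec z)
          = (NormedSpace.exp (((m : ℝ) * a) • K)).mulVec (f z)) ↔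
      (∀ z : Fin n → ℝ, fderiv ℝ f z (K.mulVec z) = (m : ℝ) • K.mulVec (f z))) ∧
    ((∀ (a : ℝ) (z : Fin n → ℝ),
        f ((NormedSpace.exp (a • K)).mulVec z)
          = (NormedSpace.exp (a • K)).mulVec (f z)) ↔
      (∀ z : Fin n → ℝ, fderiv ℝ f z (K.mulVec z) - K.mulVec (f z) = 0)) := by
  have hdf : Differentiable ℝ f := hf.differentiable one_ne_zero
  constructor
  · simp_rw [mul_comm (m : ℝ), ← smul_smul, ← smul_mulVec]
    exact isExpEquivariant_iff_fderiv_apply_mulVec (K := K) hdf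
  · exact (isExpEquivariant_iff_fderiv_apply_mulVec hdf).trans
      (forall_congr' fun _ => sub_eq_zero.symm)
end

section
/- Let m₁, m₂, g, l > 0, set A = (m₁+m₂)g/(m₁ l), B = m₂ g/(m₁ l), a = √((m₁+m₂)/m₂), and ω±² = A(1 ± √(m₂/(m₁+m₂))). Let θ₊, θ₋ : ℝ → ℝ be twice differentiable and define θ₁ = −θ₊ + θ₋ and θ₂ = a(θ₊ + θ₋). Then (θ₁, θ₂) satisfies the linearized double-pendulum equations θ̈₁ = −A θ₁ + B θ₂ and θ̈₂ = A θ₁ − A θ₂ for all t if and only if θ̈₊ = −ω₊² θ₊ and θ̈₋ = −ω₋² θ₋ for all t. -/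
/-! In the coordinates `θ₁ = -θ₊ + θ₋`, `θ₂ = a (θ₊ + θ₋)` the second derivatives transform
linearly, so the equations of motion become a pointwise linear system in `θ₊, θ₋` and their
accelerations. With `s = √(m₂/(m₁+m₂))` one has `a s = 1` and `B = A s²`; multiplying the second
equation by `s` and taking sum and difference with the first separates the two modes. -/

section SecondDerivative

variable {𝕜 F : Type*} [NontriviallyNormedField 𝕜] [NormedAddCommGroup F] [NormedSpace 𝕜 F]
  {f g : 𝕜 → F}

theorem deriv_linearCombination (hf : Differentiable 𝕜 f) (hg : Differentiable 𝕜 g) (a b : 𝕜) :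
    deriv (fun t => a • f t + b • g t) = fun t => a • deriv f t + b • deriv g t := by
  ext t
  exact (((hf t).hasDerivAt.const_smul a).add ((hg t).hasDerivAt.const_smul b)).deriv

theorem deriv_deriv_linearCombination (hf : Differentiable 𝕜 f) (hf' : Differentiable 𝕜 (deriv f))
    (hg : Differentiable 𝕜 g) (hg' : Differentiable 𝕜 (deriv g)) (a b : 𝕜) :
    deriv (deriv (fun t => a • f t + b • g t)) =
      fun t => a • deriv (deriv f) t + b • deriv (deriv g) t := by
  rw [deriv_linearCombination hf hg, deriv_linearCombination hf' hg']

end SecondDerivative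

theorem coupled_equations_iff_normal_modes {K : Type*} [Field K] [CharZero K]
    {A B a s : K} (has : a * s = 1) (hB : B = A * s ^ 2) (x y x'' y'' : K) :
    ((-x'' + y'' = -A * (-x + y) + B * (a * (x + y))) ∧
      (a * (x'' + y'') = A * (-x + y) - A * (a * (x + y)))) ↔
    (x'' = -(A * (1 + s)) * x ∧ y'' = -(A * (1 - s)) * y) := by
  subst hB
  constructor
  · rintro ⟨h₁, h₂⟩
    have hsum : x'' + y'' = s * A * (-x + y) - A * (x + y) := by
      linear_combination s * h₂ - (x'' + y'' + A * (x + y)) * has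
    have hdiff : -x'' + y'' = A * (x - y) + A * s * (x + y) := by
      linear_combination h₁ + A * s * (x + y) * has
    constructor
    · linear_combination (hsum - hdiff) / 2
    · linear_combination (hsum + hdiff) / 2
  · rintro ⟨hx, hy⟩
    constructor
    · linear_combination -hx + hy - A * s * (x + y) * has
    · linear_combination a * hx + a * hy - A * (x - y) * has

theorem double_pendulum_normal_modes_general
    (m₁ m₂ g l : ℝ) (hm₁ : 0 < m₁) (hm₂ : 0 < m₂)
    (A B a ωp2 ωm2 : ℝ)
    (hA : A = (m₁ + m₂) * g / (m₁ * l))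
    (hB : B = m₂ * g / (m₁ * l))
    (ha : a = Real.sqrt ((m₁ + m₂) / m₂))
    (hωp : ωp2 = A * (1 + Real.sqrt (m₂ / (m₁ + m₂))))
    (hωm : ωm2 = A * (1 - Real.sqrt (m₂ / (m₁ + m₂))))
    (θp θm : ℝ → ℝ)
    (hθp : Differentiable ℝ θp) (hθp' : Differentiable ℝ (deriv θp))
    (hθm : Differentiable ℝ θm) (hθm' : Differentiable ℝ (deriv θm))
    (θ₁ θ₂ : ℝ → ℝ)
    (hθ₁ : ∀ t, θ₁ t = -θp t + θm t)
    (hθ₂ : ∀ t, θ₂ t = a * (θp t + θm t)) :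
    ((∀ t, deriv (deriv θ₁) t = -A * θ₁ t + B * θ₂ t) ∧
     (∀ t, deriv (deriv θ₂) t = A * θ₁ t - A * θ₂ t)) ↔
    ((∀ t, deriv (deriv θp) t = -ωp2 * θp t) ∧
     (∀ t, deriv (deriv θm) t = -ωm2 * θm t)) := by
  set s := Real.sqrt (m₂ / (m₁ + m₂))
  have has : a * s = 1 := by
    rw [ha, ← inv_div, Real.sqrt_inv]
    exact inv_mul_cancel₀ (Real.sqrt_pos.2 (by positivity)).ne'
  have hBs : B = A * s ^ 2 := by
    rw [Real.sq_sqrt (by positivity), hA, hB]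
    field_simp
  have hθ₁'' : deriv (deriv θ₁) = fun t => -deriv (deriv θp) t + deriv (deriv θm) t := by
    have := deriv_deriv_linearCombination hθp hθp' hθm hθm' (-1) 1
    simpa [← funext hθ₁] using this
  have hθ₂'' : deriv (deriv θ₂) = fun t => a * (deriv (deriv θp) t + deriv (deriv θm) t) := by
    have := deriv_deriv_linearCombination hθp hθp' hθm hθm' a a
    simpa [← mul_add, ← funext hθ₂] using this
  simp only [hθ₁'', hθ₂'', hθ₁, hθ₂, hωp, hωm, ← forall_and]
  exact forall_congr' fun t => coupled_equations_iff_normal_modes has hBs _ _ _ _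

/-- Example D (linearized double pendulum): with `A = (m₁+m₂)g/(m₁l)`,
`B = m₂g/(m₁l)`, `a = √((m₁+m₂)/m₂)`, `ω±² = A(1 ± √(m₂/(m₁+m₂)))`, and the
change of variables `θ₁ = −θ₊ + θ₋`, `θ₂ = a(θ₊ + θ₋)`, the pair `(θ₁, θ₂)`
satisfies the linearized double-pendulum equations `θ̈₁ = −Aθ₁ + Bθ₂`,
`θ̈₂ = Aθ₁ − Aθ₂` for all `t` if and only if the normal modes decouple:
`θ̈₊ = −ω₊²θ₊` and `θ̈₋ = −ω₋²θ₋` for all `t`. -/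
theorem double_pendulum_normal_modes
    (m₁ m₂ g l : ℝ) (hm₁ : 0 < m₁) (hm₂ : 0 < m₂) (hg : 0 < g) (hl : 0 < l)
    (A B a ωp2 ωm2 : ℝ)
    (hA : A = (m₁ + m₂) * g / (m₁ * l))
    (hB : B = m₂ * g / (m₁ * l))
    (ha : a = Real.sqrt ((m₁ + m₂) / m₂))
    (hωp : ωp2 = A * (1 + Real.sqrt (m₂ / (m₁ + m₂))))
    (hωm : ωm2 = A * (1 - Real.sqrt (m₂ / (m₁ + m₂))))
    (θp θm : ℝ → ℝ)
    (hθp : Differentiable ℝ θp) (hθp' : Differentiable ℝ (deriv θp))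
    (hθm : Differentiable ℝ θm) (hθm' : Differentiable ℝ (deriv θm))
    (θ₁ θ₂ : ℝ → ℝ)
    (hθ₁ : ∀ t, θ₁ t = -θp t + θm t)
    (hθ₂ : ∀ t, θ₂ t = a * (θp t + θm t)) :
    ((∀ t, deriv (deriv θ₁) t = -A * θ₁ t + B * θ₂ t) ∧
     (∀ t, deriv (deriv θ₂) t = A * θ₁ t - A * θ₂ t)) ↔
    ((∀ t, deriv (deriv θp) t = -ωp2 * θp t) ∧
     (∀ t, deriv (deriv θm) t = -ωm2 * θm t)) :=
  double_pendulum_normal_modes_general m₁ m₂ g l hm₁ hm₂ A B a ωp2 ωm2 hA hB ha hωp hωm θp θm hθp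
    hθp' hθm hθm' θ₁ θ₂ hθ₁ hθ₂
end

section
/- Let M > 0 and let U = {(t,x,y,z) ∈ ℝ⁴ : r > 2M} with r = √(x²+y²+z²). Define Φ : U → ℝ⁴ by Φ(t,x,y,z) = (t + 2M[2u + ln((u−1)/(u+1))], x, y, z), where u = √(r/(2M)). Let g_Sch(t,x,y,z) be the 4×4 matrix with entries (g_Sch)₀₀ = 1 − 2M/r, (g_Sch)₀ᵢ = 0, (g_Sch)ᵢⱼ = −δᵢⱼ − 2M xᵢxⱼ/((r−2M)r²), and let g_GP(t,x,y,z) be the 4×4 matrix with entries (g_GP)₀₀ = 1 − 2M/r, (g_GP)₀ᵢ = (g_GP)ᵢ₀ = −√(2M/r)·xᵢ/r, (g_GP)ᵢⱼ = −δᵢⱼ, for spatial indices i,j ∈ {1,2,3} with (x₁,x₂,x₃) = (x,y,z). Then for every w ∈ U, (DΦ(w))ᵀ g_GP(Φ(w)) (DΦ(w)) = g_Sch(w), where DΦ(w) is the 4×4 Jacobian matrix of Φ at w. -/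
/-!
Φ only shifts time by a function `T(r)` with `T'(r) = √(2M/r) / (1 - 2M/r)`, so
`DΦ = 1 + e₀ ⊗ T'(r) ∇r` is a rank-one perturbation of the identity, and `g_GP(Φ w) = g_GP(w)`
because Φ fixes the spatial coordinates. The pullback of `g_GP` is therefore `g_GP` plus rank-one
corrections: `T'` is exactly the value that cancels the cross terms `(g_GP)₀ᵢ`, and the remaining
spatial correction `-T'(r) √(2M/r) xᵢxⱼ/r²` is the Schwarzschild term `-2M xᵢxⱼ/((r-2M)r²)`.
-/

open Matrix

/-- The spatial radius `r = √(x² + y² + z²)` of a spacetime point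
(coordinate `0` is time, coordinates `1,2,3` are spatial). -/
noncomputable def spatialRad (w : Fin 4 → ℝ) : ℝ :=
  Real.sqrt (w 1 ^ 2 + w 2 ^ 2 + w 3 ^ 2)

/-- The Gullstrand–Painlevé time transformation
`Φ(t,x,y,z) = (t + 2M[2u + ln((u−1)/(u+1))], x, y, z)` with `u = √(r/2M)`. -/
noncomputable def PhiGP (M : ℝ) (w : Fin 4 → ℝ) : Fin 4 → ℝ :=
  ![w 0 + 2 * M * (2 * Real.sqrt (spatialRad w / (2 * M)) +
      Real.log ((Real.sqrt (spatialRad w / (2 * M)) - 1) /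
                (Real.sqrt (spatialRad w / (2 * M)) + 1))),
    w 1, w 2, w 3]

/-- The Schwarzschild metric in Cartesian spatial coordinates:
`g₀₀ = 1 − 2M/r`, `g₀ᵢ = gᵢ₀ = 0`, `gᵢⱼ = −δᵢⱼ − 2Mxᵢxⱼ/((r−2M)r²)`. -/
noncomputable def gSch (M : ℝ) (w : Fin 4 → ℝ) : Matrix (Fin 4) (Fin 4) ℝ :=
  Matrix.of fun i j =>
    if i = 0 ∧ j = 0 then 1 - 2 * M / spatialRad w
    else if i = 0 ∨ j = 0 then 0
    else -(if i = j then (1 : ℝ) else 0)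
      - 2 * M * w i * w j / ((spatialRad w - 2 * M) * spatialRad w ^ 2)

/-- The Gullstrand–Painlevé metric:
`g₀₀ = 1 − 2M/r`, `g₀ᵢ = gᵢ₀ = −√(2M/r)·xᵢ/r`, `gᵢⱼ = −δᵢⱼ`. -/
noncomputable def gGP (M : ℝ) (w : Fin 4 → ℝ) : Matrix (Fin 4) (Fin 4) ℝ :=
  Matrix.of fun i j =>
    if i = 0 ∧ j = 0 then 1 - 2 * M / spatialRad w
    else if i = 0 then -Real.sqrt (2 * M / spatialRad w) * w j / spatialRad w
    else if j = 0 then -Real.sqrt (2 * M / spatialRad w) * w i / spatialRad w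
    else -(if i = j then (1 : ℝ) else 0)

/-- The Jacobian matrix `DΦ(w)` of a map `Φ : ℝ⁴ → ℝ⁴`. -/
noncomputable def jacobianMatrix (Φ : (Fin 4 → ℝ) → (Fin 4 → ℝ)) (w : Fin 4 → ℝ) :
    Matrix (Fin 4) (Fin 4) ℝ :=
  Matrix.of fun i j => fderiv ℝ (fun v => Φ v i) w (Pi.single j 1)

theorem transpose_one_add_vecMulVec_single_mul_mul_apply {n R : Type*} [Fintype n] [DecidableEq n]
    [CommRing R] (k : n) (a : n → R) (G : Matrix n n R) (i j : n) :
    ((1 + vecMulVec (Pi.single k 1) a : Matrix n n R)ᵀ * G * (1 + vecMulVec (Pi.single k 1) a)) i j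
      = G i j + a i * G k j + G i k * a j + a i * G k k * a j := by
  simp only [transpose_add, transpose_one, transpose_vecMulVec, add_mul, one_mul, Matrix.mul_apply,
    Matrix.add_apply, vecMulVec_apply, Pi.single_apply, mul_ite, mul_one, mul_zero, ite_mul, zero_mul,
    Finset.sum_ite_eq', Finset.mem_univ, ↓reduceIte, one_apply, mul_add, Finset.sum_add_distrib]
  ring

theorem Real.hasDerivAt_log_sub_one_div_add_one {u : ℝ} (h₁ : u - 1 ≠ 0) (h₂ : u + 1 ≠ 0) :
    HasDerivAt (fun u => Real.log ((u - 1) / (u + 1))) (2 / (u ^ 2 - 1)) u := by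
  have hq := ((hasDerivAt_id' u).sub_const 1).fun_div ((hasDerivAt_id' u).add_const 1) h₂
  convert hq.log (div_ne_zero h₁ h₂) using 1
  rw [show u ^ 2 - 1 = (u - 1) * (u + 1) by ring]
  field_simp
  ring

noncomputable def gpTime (M r : ℝ) : ℝ :=
  2 * M * (2 * √(r / (2 * M)) + Real.log ((√(r / (2 * M)) - 1) / (√(r / (2 * M)) + 1)))

theorem hasDerivAt_gpTime {M r : ℝ} (hM : 0 < M) (hr : 2 * M < r) :
    HasDerivAt (gpTime M) (√(2 * M / r) / (1 - 2 * M / r)) r := by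
  have hr₀ : 0 < r := by linarith
  set u := √(r / (2 * M)) with hu
  have hu_sq : u ^ 2 = r / (2 * M) := Real.sq_sqrt (by positivity)
  have hu_gt : 1 < u := by
    rw [hu, Real.lt_sqrt zero_le_one, one_pow, one_lt_div (by positivity)]
    exact hr
  have hsqrt : HasDerivAt (fun r => √(r / (2 * M))) (1 / (2 * M) / (2 * u)) r :=
    ((hasDerivAt_id' r).div_const _).sqrt (by positivity)
  have hlog := Real.hasDerivAt_log_sub_one_div_add_one (by linarith : u - 1 ≠ 0) (by linarith)
  have hT := ((((hasDerivAt_id' u).const_mul 2).add hlog).comp r hsqrt).const_mul (2 * M)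
  refine hT.congr_deriv ?_
  have hinv : √(2 * M / r) = u⁻¹ := by
    rw [hu, ← Real.sqrt_inv, inv_div]
  have hr' : r = 2 * M * u ^ 2 := by rw [hu_sq]; field_simp
  rw [hinv, hr']
  have : u ^ 2 - 1 ≠ 0 := by nlinarith
  have : u ≠ 0 := by positivity
  field_simp
  ring

theorem hasFDerivAt_spatialRad {w : Fin 4 → ℝ} (hw : spatialRad w ≠ 0) :
    HasFDerivAt spatialRad ((spatialRad w)⁻¹ •
      ∑ i ∈ ({1, 2, 3} : Finset (Fin 4)), w i • ContinuousLinearMap.proj (R := ℝ) i) w := by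
  have hq : HasFDerivAt (fun v : Fin 4 → ℝ => ∑ i ∈ ({1, 2, 3} : Finset (Fin 4)), v i ^ 2)
      (∑ i ∈ ({1, 2, 3} : Finset (Fin 4)), (2 * w i) • ContinuousLinearMap.proj (R := ℝ) i) w :=
    HasFDerivAt.fun_sum fun i _ => by simpa using (hasFDerivAt_apply (𝕜 := ℝ) i w).pow 2
  have hsq (v : Fin 4 → ℝ) :
      ∑ i ∈ ({1, 2, 3} : Finset (Fin 4)), v i ^ 2 = v 1 ^ 2 + v 2 ^ 2 + v 3 ^ 2 := by
    simp [Finset.sum_insert, add_assoc]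
  simp only [hsq] at hq
  refine (hq.sqrt fun h => hw (by simp [spatialRad, h])).congr_fderiv ?_
  simp only [Finset.smul_sum, smul_smul]
  congr! 2 with i
  simp only [spatialRad] at hw ⊢
  field_simp

theorem HasFDerivAt.jacobianMatrix_eq {Φ : (Fin 4 → ℝ) → Fin 4 → ℝ}
    {Φ' : (Fin 4 → ℝ) →L[ℝ] Fin 4 → ℝ} {w : Fin 4 → ℝ} (h : HasFDerivAt Φ Φ' w) :
    jacobianMatrix Φ w = LinearMap.toMatrix' (Φ' : (Fin 4 → ℝ) →ₗ[ℝ] Fin 4 → ℝ) := by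
  ext i j
  rw [jacobianMatrix, of_apply, (hasFDerivAt_pi'.1 h i).fderiv, LinearMap.toMatrix'_apply]
  rfl

theorem jacobianMatrix_add_smul_single {τ : (Fin 4 → ℝ) → ℝ} {τ' : (Fin 4 → ℝ) →L[ℝ] ℝ}
    {w : Fin 4 → ℝ} (hτ : HasFDerivAt τ τ' w) (k : Fin 4) :
    jacobianMatrix (fun v => v + τ v • Pi.single k 1) w
      = 1 + vecMulVec (Pi.single k 1) (fun j => τ' (Pi.single j 1)) := by
  have hΦ : HasFDerivAt (fun v => v + τ v • Pi.single k (1 : ℝ)) _ w :=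
    (hasFDerivAt_id w).add (hτ.smul_const _)
  rw [hΦ.jacobianMatrix_eq]
  ext i j
  simp [LinearMap.toMatrix'_apply, one_apply, vecMulVec_apply, Pi.single_apply, eq_comm, mul_comm]

theorem PhiGP_eq_add_smul_single (M : ℝ) :
    PhiGP M = fun v => v + gpTime M (spatialRad v) • Pi.single 0 1 := by
  funext v i
  fin_cases i <;> simp [PhiGP, gpTime, add_comm]

theorem jacobianMatrix_PhiGP {M : ℝ} (hM : 0 < M) {w : Fin 4 → ℝ} (hr : 2 * M < spatialRad w) :
    jacobianMatrix (PhiGP M) w = 1 + vecMulVec (Pi.single 0 1)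
      (fun j => if j = 0 then 0 else √(2 * M / spatialRad w) / (spatialRad w - 2 * M) * w j) := by
  have hr₀ : spatialRad w ≠ 0 := by linarith
  have hr₂ : spatialRad w - 2 * M ≠ 0 := by linarith
  have hτ : HasFDerivAt (fun v => gpTime M (spatialRad v)) _ w :=
    (hasDerivAt_gpTime hM hr).comp_hasFDerivAt w (hasFDerivAt_spatialRad hr₀)
  rw [PhiGP_eq_add_smul_single, jacobianMatrix_add_smul_single hτ]
  congr 2 with j
  fin_cases j <;> simp [Finset.sum_insert] <;> field_simp

theorem PhiGP_apply_of_ne_zero (M : ℝ) (w : Fin 4 → ℝ) {j : Fin 4} (hj : j ≠ 0) :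
    PhiGP M w j = w j := by
  simp [PhiGP_eq_add_smul_single, hj]

theorem spatialRad_PhiGP (M : ℝ) (w : Fin 4 → ℝ) : spatialRad (PhiGP M w) = spatialRad w := by
  simp only [spatialRad, PhiGP_apply_of_ne_zero M w (by decide : (1 : Fin 4) ≠ 0),
    PhiGP_apply_of_ne_zero M w (by decide : (2 : Fin 4) ≠ 0),
    PhiGP_apply_of_ne_zero M w (by decide : (3 : Fin 4) ≠ 0)]

theorem gGP_PhiGP (M : ℝ) (w : Fin 4 → ℝ) : gGP M (PhiGP M w) = gGP M w := by
  ext i j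
  simp only [gGP, of_apply, spatialRad_PhiGP]
  split_ifs <;> simp_all [PhiGP_apply_of_ne_zero]

/-- Example F: outside the horizon (`r > 2M`), the pullback of the
Gullstrand–Painlevé metric under the Gullstrand–Painlevé time transformation
equals the Schwarzschild metric:
`(DΦ(w))ᵀ g_GP(Φ(w)) (DΦ(w)) = g_Sch(w)` for every `w` with `r(w) > 2M`. -/
theorem schwarzschild_is_GP_pullback (M : ℝ) (hM : 0 < M) :
    ∀ w : Fin 4 → ℝ, 2 * M < spatialRad w →
      (jacobianMatrix (PhiGP M) w)ᵀ * gGP M (PhiGP M w) * jacobianMatrix (PhiGP M) w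
        = gSch M w := by
  intro w hr
  rw [gGP_PhiGP, jacobianMatrix_PhiGP hM hr]
  ext i j
  rw [transpose_one_add_vecMulVec_single_mul_mul_apply]
  have hr₀ : 0 < spatialRad w := by linarith
  have hr₂ : spatialRad w - 2 * M ≠ 0 := by linarith
  have hβ : spatialRad w * √(2 * M / spatialRad w) ^ 2 = 2 * M := by
    rw [Real.sq_sqrt (by positivity)]
    field_simp
  rcases eq_or_ne i 0 with rfl | hi <;> rcases eq_or_ne j 0 with rfl | hj
  · simp [gGP, gSch]
  · simp only [gGP, gSch, of_apply, hj, and_false, and_self, or_false, ↓reduceIte, neg_mul,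
      zero_mul, add_zero]
    field_simp
    ring
  · simp only [gGP, gSch, of_apply, hi, and_true, and_self, or_true, ↓reduceIte, neg_mul,
      mul_zero, add_zero]
    field_simp
    ring
  · simp only [gGP, gSch, of_apply, hi, hj, and_self, and_false, and_true, or_self, ↓reduceIte,
      neg_mul]
    generalize √(2 * M / spatialRad w) = β at hβ ⊢
    field_simp
    linear_combination -(w i * w j) * hβ
end

section
/- Let c₁, c₂, c₃ : ℝ → ℝ be differentiable. (1) If x, p : ℝ → ℝ are differentiable with ẋ = p and ṗ = 0, then the curves x'(t) = c₁(p(t))x(t) + c₂(p(t)) and p'(t) = c₃(p(t)) satisfy ṗ'(t) = 0 and ẋ'(t) = c₁(p(t))·p(t), which is constant in t; in particular (x', p') again describes uniform motion with constant velocity. (2) For any differentiable A : ℝ → ℝ, the vector field f(x,p) = (A(p), 0) on ℝ² satisfies both the Hamiltonicity condition MJ + JᵀM = 0, where J is the Jacobian of f and M = [[0,1],[−1,0]], and the translational-invariance condition ∂f/∂x = 0. -/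
open Matrix

/-- The vector field `f(x,p) = (A(p), 0)` on ℝ² (phase-space coordinates `(x,p)`). -/
noncomputable def freeField (A : ℝ → ℝ) : (Fin 2 → ℝ) → (Fin 2 → ℝ) :=
  fun w => ![A (w 1), 0]

/-- The Jacobian matrix of a vector field on ℝ². -/
noncomputable def jac2 (f : (Fin 2 → ℝ) → (Fin 2 → ℝ)) (z : Fin 2 → ℝ) :
    Matrix (Fin 2) (Fin 2) ℝ :=
  Matrix.of fun i j => fderiv ℝ (fun w => f w i) z (Pi.single j 1)

/-! A constant momentum freezes every function of it, so the transformation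
`x' = c₁(p)x + c₂(p)`, `p' = c₃(p)` acts on a uniform motion as a fixed affine map.
The field `(A(p), 0)` has a traceless Jacobian, and in dimension two `MJ + JᵀM = 0`
says exactly that `J` is traceless. -/

section ConstantMomentum

variable {𝕜 : Type*} [RCLike 𝕜] {p : 𝕜 → 𝕜}

lemma deriv_comp_eq_zero_of_deriv_eq_zero {E : Type*} [NormedAddCommGroup E]
    [NormedSpace 𝕜 E] (hp : Differentiable 𝕜 p) (hp' : ∀ t, deriv p t = 0) (g : 𝕜 → E)
    (t : 𝕜) : deriv (fun s => g (p s)) t = 0 := by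
  have hfrozen : (fun s => g (p s)) = fun _ => g (p t) := by
    funext s
    rw [is_const_of_deriv_eq_zero hp hp' s t]
  rw [hfrozen, deriv_const]

lemma deriv_mul_add_of_deriv_eq_zero (hp : Differentiable 𝕜 p) (hp' : ∀ t, deriv p t = 0)
    {x : 𝕜 → 𝕜} {t : 𝕜} (hx : DifferentiableAt 𝕜 x t) (a b : 𝕜 → 𝕜) :
    deriv (fun s => a (p s) * x s + b (p s)) t = a (p t) * deriv x t := by
  have hfrozen : (fun s => a (p s) * x s + b (p s)) = fun s => a (p t) * x s + b (p t) := by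
    funext s
    rw [is_const_of_deriv_eq_zero hp hp' s t]
  rw [hfrozen, deriv_add_const, deriv_const_mul _ hx]

end ConstantMomentum

lemma fderiv_comp_apply_eq_deriv_mul {𝕜 ι : Type*} [NontriviallyNormedField 𝕜] [Fintype ι]
    {A : 𝕜 → 𝕜} {z : ι → 𝕜} (i : ι) (hA : DifferentiableAt 𝕜 A (z i)) (v : ι → 𝕜) :
    fderiv 𝕜 (fun w => A (w i)) z v = deriv A (z i) * v i := by
  have h : HasFDerivAt (fun w => A (w i)) (deriv A (z i) • ContinuousLinearMap.proj i) z :=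
    hA.hasDerivAt.comp_hasFDerivAt z (hasFDerivAt_apply (𝕜 := 𝕜) (F' := fun _ => 𝕜) i z)
  simp [h.fderiv]

lemma fin_two_mul_add_transpose_mul_eq_zero_of_trace_eq_zero {R : Type*} [CommRing R]
    {J : Matrix (Fin 2) (Fin 2) R} (hJ : J.trace = 0) :
    !![0, 1; -1, 0] * J + Jᵀ * !![0, 1; -1, 0] = 0 := by
  have hJ₁₁ : J 1 1 = -J 0 0 := eq_neg_of_add_eq_zero_right (trace_fin_two J ▸ hJ)
  ext i j
  fin_cases i <;> fin_cases j <;>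
    simp [Matrix.mul_apply, Fin.sum_univ_two, vecMul, dotProduct, hJ₁₁]

lemma jac2_freeField {A : ℝ → ℝ} {z : Fin 2 → ℝ} (hA : DifferentiableAt ℝ A (z 1)) :
    jac2 (freeField A) z = !![0, deriv A (z 1); 0, 0] := by
  ext i j
  fin_cases i <;> fin_cases j <;>
    simp [jac2, freeField, fderiv_comp_apply_eq_deriv_mul 1 hA]

theorem uniform_motion_underconstrained_general
    (c₁ c₂ c₃ : ℝ → ℝ)
    (x p : ℝ → ℝ) (hx : Differentiable ℝ x) (hp : Differentiable ℝ p)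
    (hdyn₁ : ∀ t, deriv x t = p t) (hdyn₂ : ∀ t, deriv p t = 0) :
    ((∀ t, deriv (fun s => c₃ (p s)) t = 0) ∧
     (∀ t, deriv (fun s => c₁ (p s) * x s + c₂ (p s)) t = c₁ (p t) * p t) ∧
     (∃ v : ℝ, ∀ t, deriv (fun s => c₁ (p s) * x s + c₂ (p s)) t = v)) ∧
    (∀ A : ℝ → ℝ, Differentiable ℝ A →
      (∀ z : Fin 2 → ℝ,
        (!![0, 1; -1, 0] : Matrix (Fin 2) (Fin 2) ℝ) * jac2 (freeField A) z
          + (jac2 (freeField A) z)ᵀ * (!![0, 1; -1, 0] : Matrix (Fin 2) (Fin 2) ℝ) = 0) ∧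
      (∀ (z : Fin 2 → ℝ) (i : Fin 2),
        fderiv ℝ (fun w => freeField A w i) z (Pi.single 0 1) = 0)) := by
  have hvelocity (t : ℝ) :
      deriv (fun s => c₁ (p s) * x s + c₂ (p s)) t = c₁ (p t) * p t := by
    rw [deriv_mul_add_of_deriv_eq_zero hp hdyn₂ (hx t) c₁ c₂, hdyn₁]
  refine ⟨⟨deriv_comp_eq_zero_of_deriv_eq_zero hp hdyn₂ c₃, hvelocity,
    c₁ (p 0) * p 0, fun t => ?_⟩, fun A hA => ⟨fun z => ?_, fun z i => ?_⟩⟩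
  · rw [hvelocity, is_const_of_deriv_eq_zero hp hdyn₂ t 0]
  · refine fin_two_mul_add_transpose_mul_eq_zero_of_trace_eq_zero ?_
    simp [jac2_freeField (hA (z 1))]
  · change jac2 (freeField A) z i 0 = 0
    fin_cases i <;> simp [jac2_freeField (hA (z 1))]

/-- Underconstrained transformations for 1D uniform motion (Appendix E):
(1) if `ẋ = p` and `ṗ = 0`, then for differentiable `c₁, c₂, c₃` the transformed
curves `x' = c₁(p)x + c₂(p)`, `p' = c₃(p)` satisfy `ṗ' = 0` and
`ẋ' = c₁(p)·p`, which is constant in `t` — uniform motion with constant velocity;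
(2) for any differentiable `A`, the vector field `f(x,p) = (A(p), 0)` satisfies
both the Hamiltonicity condition `MJ + JᵀM = 0` with `M = [[0,1],[−1,0]]` and
the translational-invariance condition `∂f/∂x = 0`. -/
theorem uniform_motion_underconstrained
    (c₁ c₂ c₃ : ℝ → ℝ)
    (hc₁ : Differentiable ℝ c₁) (hc₂ : Differentiable ℝ c₂) (hc₃ : Differentiable ℝ c₃)
    (x p : ℝ → ℝ) (hx : Differentiable ℝ x) (hp : Differentiable ℝ p)
    (hdyn₁ : ∀ t, deriv x t = p t) (hdyn₂ : ∀ t, deriv p t = 0) :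
    ((∀ t, deriv (fun s => c₃ (p s)) t = 0) ∧
     (∀ t, deriv (fun s => c₁ (p s) * x s + c₂ (p s)) t = c₁ (p t) * p t) ∧
     (∃ v : ℝ, ∀ t, deriv (fun s => c₁ (p s) * x s + c₂ (p s)) t = v)) ∧
    (∀ A : ℝ → ℝ, Differentiable ℝ A →
      (∀ z : Fin 2 → ℝ,
        (!![0, 1; -1, 0] : Matrix (Fin 2) (Fin 2) ℝ) * jac2 (freeField A) z
          + (jac2 (freeField A) z)ᵀ * (!![0, 1; -1, 0] : Matrix (Fin 2) (Fin 2) ℝ) = 0) ∧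
      (∀ (z : Fin 2 → ℝ) (i : Fin 2),
        fderiv ℝ (fun w => freeField A w i) z (Pi.single 0 1) = 0)) :=
  uniform_motion_underconstrained_general c₁ c₂ c₃ x p hx hp hdyn₁ hdyn₂
end
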